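/- Let W be symmetric doubly stochastic with spectral gap ρ, let γ ∈ (0,1], and C = ‖W − I‖². For matrices X, H, V ∈ R^{d×n} with x̄ = (1/n)X𝟏 and v̄ = (1/n)V𝟏, and X⁺ = X + γH(W − I) − ηV, it holds that ‖X⁺ − x̄⁺𝟏ᵀ‖_F² ≤ (1 − γρ/2)‖X − x̄𝟏ᵀ‖_F² + (6γC/ρ)‖H − X‖_F² + (6η²/(γρ))‖V − v̄𝟏ᵀ‖_F², where x̄⁺ = (1/n)X⁺𝟏. -/

import Mathlib

open Finset Matrix
open scoped RealInnerProductSpace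

/-!
Since `W𝟏 = 𝟏` and `W` is symmetric, `W - I` kills `𝟏` and maps into `𝟏^⊥`, so each row of the new
consensus error is `(I + γ(W - I))` applied to the old one, plus the perturbation
`γ(W - I)(h - x) - η(v - v̄𝟏)`. The old consensus error is orthogonal to `𝟏`, which spans the
eigenvalue-`1` eigenspace, so in the eigenbasis of `W` every remaining coefficient is multiplied by
`1 + γ(λᵢ - 1) ∈ [-(1 - γρ), 1 - γρ]`. Young's inequality with `β = γρ/2` separates the two parts,
and `(1 + β)(1 - γρ)² ≤ 1 - γρ/2`, `2(1 + 1/β) ≤ 6/(γρ)` give the constants.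
-/

lemma norm_add_sq_le_one_add_mul {F : Type*} [NormedAddCommGroup F] [InnerProductSpace ℝ F]
    (a b : F) {β : ℝ} (hβ : 0 < β) :
    ‖a + b‖ ^ 2 ≤ (1 + β) * ‖a‖ ^ 2 + (1 + β⁻¹) * ‖b‖ ^ 2 := by
  have hyoung : 2 * (‖a‖ * ‖b‖) ≤ β * ‖a‖ ^ 2 + β⁻¹ * ‖b‖ ^ 2 := by
    have h : β * ‖a‖ ^ 2 + β⁻¹ * ‖b‖ ^ 2 - 2 * (‖a‖ * ‖b‖) = (β * ‖a‖ - ‖b‖) ^ 2 / β := by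
      field_simp
      ring
    linarith [div_nonneg (sq_nonneg (β * ‖a‖ - ‖b‖)) hβ.le]
  rw [norm_add_sq_real]
  linarith [real_inner_le_norm a b]

lemma norm_sub_sq_le_two_mul {F : Type*} [SeminormedAddCommGroup F] (a b : F) :
    ‖a - b‖ ^ 2 ≤ 2 * (‖a‖ ^ 2 + ‖b‖ ^ 2) :=
  (pow_le_pow_left₀ (norm_nonneg _) (norm_sub_le a b) 2).trans add_sq_le

lemma one_add_half_mul_one_sub_sq_le {t : ℝ} (ht0 : 0 ≤ t) (ht1 : t ≤ 1) :
    (1 + t / 2) * (1 - t) ^ 2 ≤ 1 - t / 2 := by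
  nlinarith [mul_le_mul_of_nonneg_left ht1 ht0, mul_nonneg ht0 ht0]

lemma one_add_inv_half_mul_two_le {t : ℝ} (ht0 : 0 < t) (ht1 : t ≤ 1) :
    (1 + (t / 2)⁻¹) * 2 ≤ 6 / t := by
  rw [le_div_iff₀ ht0]
  field_simp
  linarith

namespace Matrix.IsHermitian

variable {ι : Type*} [Fintype ι] [DecidableEq ι] {W : Matrix ι ι ℝ} (hW : W.IsHermitian)
include hW

lemma inner_eigenvectorBasis_toEuclideanCLM (i : ι) (u : EuclideanSpace ℝ ι) :
    ⟪hW.eigenvectorBasis i, toEuclideanCLM (𝕜 := ℝ) W u⟫ =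
      hW.eigenvalues i * ⟪hW.eigenvectorBasis i, u⟫ := by
  have heigen : toEuclideanCLM (𝕜 := ℝ) W (hW.eigenvectorBasis i) =
      hW.eigenvalues i • hW.eigenvectorBasis i := by
    ext j
    simpa using congrFun (hW.mulVec_eigenvectorBasis i) j
  calc ⟪hW.eigenvectorBasis i, toEuclideanCLM (𝕜 := ℝ) W u⟫
      = ⟪toEuclideanCLM (𝕜 := ℝ) W (hW.eigenvectorBasis i), u⟫ :=
        (isSymmetric_toEuclideanLin_iff.mpr hW _ _).symm
    _ = hW.eigenvalues i * ⟪hW.eigenvectorBasis i, u⟫ := by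
        rw [heigen, real_inner_smul_left]

lemma inner_eigenvectorBasis_eq_zero_of_mulVec_eq_smul {v : ι → ℝ} {c : ℝ}
    (hv : W *ᵥ v = c • v) {i : ι} (hi : hW.eigenvalues i ≠ c) :
    ⟪hW.eigenvectorBasis i, WithLp.toLp 2 v⟫ = 0 := by
  have h := hW.inner_eigenvectorBasis_toEuclideanCLM i (WithLp.toLp 2 v)
  rw [toEuclideanCLM_toLp, hv, WithLp.toLp_smul, real_inner_smul_right] at h
  have h' : (hW.eigenvalues i - c) * ⟪hW.eigenvectorBasis i, WithLp.toLp 2 v⟫ = 0 := by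
    linarith
  exact (mul_eq_zero.mp h').resolve_left (sub_ne_zero.mpr hi)

lemma inner_eigenvectorBasis_eq_zero_of_sum_eq_zero
    (hrow : W *ᵥ (fun _ => 1) = fun _ => 1) {i₀ : ι}
    (hsimple : ∀ i, i ≠ i₀ → hW.eigenvalues i ≠ 1)
    {u : EuclideanSpace ℝ ι} (hu : ∑ j, u j = 0) :
    ⟪hW.eigenvectorBasis i₀, u⟫ = 0 := by
  set ones : EuclideanSpace ℝ ι := WithLp.toLp 2 (fun _ => 1)
  have hones : ones = ⟪hW.eigenvectorBasis i₀, ones⟫ • hW.eigenvectorBasis i₀ := by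
    conv_lhs => rw [← hW.eigenvectorBasis.sum_repr' ones]
    refine Finset.sum_eq_single i₀ (fun i _ hi => ?_) (by simp)
    rw [hW.inner_eigenvectorBasis_eq_zero_of_mulVec_eq_smul (c := 1) (by simpa using hrow)
      (hsimple i hi), zero_smul]
  have hc : ⟪hW.eigenvectorBasis i₀, ones⟫ ≠ 0 := by
    intro h
    rw [h, zero_smul] at hones
    simpa [ones] using congr_arg (· i₀) hones
  have hsum : ⟪ones, u⟫ = 0 := by simpa [ones, PiLp.inner_apply] using hu
  rw [hones, real_inner_smul_left] at hsum
  exact (mul_eq_zero.mp hsum).resolve_left hc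

lemma norm_sq_add_smul_toEuclideanCLM_sub_one (γ : ℝ) (u : EuclideanSpace ℝ ι) :
    ‖u + γ • toEuclideanCLM (𝕜 := ℝ) (W - 1) u‖ ^ 2 =
      ∑ i, ((1 + γ * (hW.eigenvalues i - 1)) * ⟪hW.eigenvectorBasis i, u⟫) ^ 2 := by
  rw [← hW.eigenvectorBasis.sum_sq_inner_right]
  congr! 2 with i
  rw [map_sub, map_one, _root_.sub_apply, one_apply_eq_self,
    inner_add_right, real_inner_smul_right, inner_sub_right,
    hW.inner_eigenvectorBasis_toEuclideanCLM]
  ring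

theorem norm_sq_add_smul_toEuclideanCLM_sub_one_le
    (hrow : W *ᵥ (fun _ => 1) = fun _ => 1) {ρ γ : ℝ} (hρ : 0 < ρ) (hγ0 : 0 ≤ γ) (hγ1 : γ ≤ 1)
    {i₀ : ι} (hgap : ∀ i, i ≠ i₀ → |hW.eigenvalues i| ≤ 1 - ρ)
    {u : EuclideanSpace ℝ ι} (hu : ∑ j, u j = 0) :
    ‖u + γ • toEuclideanCLM (𝕜 := ℝ) (W - 1) u‖ ^ 2 ≤ (1 - γ * ρ) ^ 2 * ‖u‖ ^ 2 := by
  have hu₀ : ⟪hW.eigenvectorBasis i₀, u⟫ = 0 :=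
    hW.inner_eigenvectorBasis_eq_zero_of_sum_eq_zero hrow
      (fun i hi => by linarith [le_abs_self (hW.eigenvalues i), hgap i hi]) hu
  rw [hW.norm_sq_add_smul_toEuclideanCLM_sub_one, ← hW.eigenvectorBasis.sum_sq_inner_right,
    mul_sum]
  refine sum_le_sum fun i _ => ?_
  rcases eq_or_ne i i₀ with rfl | hi
  · simp [hu₀]
  · obtain ⟨hlo, hhi⟩ := abs_le.mp (hgap i hi)
    have hcoef : |1 + γ * (hW.eigenvalues i - 1)| ≤ 1 - γ * ρ :=
      abs_le.mpr ⟨by nlinarith, by nlinarith⟩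
    rw [mul_pow, ← sq_abs (1 + _)]
    gcongr

end Matrix.IsHermitian

section ConsensusError

variable {n : ℕ}

/-- A row of the paper's `X - x̄𝟏ᵀ`. -/
noncomputable def consensusError : EuclideanSpace ℝ (Fin n) →ₗ[ℝ] EuclideanSpace ℝ (Fin n) where
  toFun x := x - ((1 / n : ℝ) * ∑ j, x j) • WithLp.toLp 2 (fun _ => 1)
  map_add' x y := by
    simp only [PiLp.add_apply, sum_add_distrib]
    module
  map_smul' c x := by
    simp only [PiLp.smul_apply, smul_eq_mul, ← mul_sum, RingHom.id_apply]
    module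

lemma consensusError_eq (x : EuclideanSpace ℝ (Fin n)) :
    consensusError x = x - ((1 / n : ℝ) * ∑ j, x j) • WithLp.toLp 2 (fun _ => 1) :=
  rfl

lemma consensusError_apply (x : EuclideanSpace ℝ (Fin n)) (j : Fin n) :
    consensusError x j = x j - (1 / n : ℝ) * ∑ k, x k := by
  simp [consensusError]

lemma sum_consensusError_eq_zero (x : EuclideanSpace ℝ (Fin n)) :
    ∑ j, consensusError x j = 0 := by
  rcases Nat.eq_zero_or_pos n with rfl | hn
  · simp
  · simp only [consensusError_apply, sum_sub_distrib, sum_const, card_univ, Fintype.card_fin,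
      nsmul_eq_mul]
    field_simp
    ring

end ConsensusError

section Update

variable {n : ℕ} {W : Matrix (Fin n) (Fin n) ℝ}

lemma toEuclideanCLM_sub_one_ones (hrow : W *ᵥ (fun _ => 1) = fun _ => 1) :
    toEuclideanCLM (𝕜 := ℝ) (W - 1) (WithLp.toLp 2 (fun _ => 1)) = 0 := by
  rw [toEuclideanCLM_toLp, sub_mulVec, hrow, one_mulVec, sub_self, WithLp.toLp_zero]

lemma toEuclideanCLM_sub_one_consensusError (hrow : W *ᵥ (fun _ => 1) = fun _ => 1)
    (x : EuclideanSpace ℝ (Fin n)) :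
    toEuclideanCLM (𝕜 := ℝ) (W - 1) (consensusError x) = toEuclideanCLM (𝕜 := ℝ) (W - 1) x := by
  rw [consensusError_eq, map_sub, map_smul, toEuclideanCLM_sub_one_ones hrow, smul_zero, sub_zero]

lemma consensusError_toEuclideanCLM_sub_one (hW : W.IsHermitian)
    (hrow : W *ᵥ (fun _ => 1) = fun _ => 1) (h : EuclideanSpace ℝ (Fin n)) :
    consensusError (toEuclideanCLM (𝕜 := ℝ) (W - 1) h) = toEuclideanCLM (𝕜 := ℝ) (W - 1) h := by
  have hsum : ∑ j, toEuclideanCLM (𝕜 := ℝ) (W - 1) h j = 0 := by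
    calc ∑ j, toEuclideanCLM (𝕜 := ℝ) (W - 1) h j
        = ⟪WithLp.toLp 2 (fun _ => 1), toEuclideanCLM (𝕜 := ℝ) (W - 1) h⟫ := by
          simp [PiLp.inner_apply]
      _ = ⟪toEuclideanCLM (𝕜 := ℝ) (W - 1) (WithLp.toLp 2 (fun _ => 1)), h⟫ :=
          (isSymmetric_toEuclideanLin_iff.mpr (hW.sub isHermitian_one) _ _).symm
      _ = 0 := by rw [toEuclideanCLM_sub_one_ones hrow, inner_zero_left]
  rw [consensusError_eq, hsum, mul_zero, zero_smul, sub_zero]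

lemma consensusError_update (hW : W.IsHermitian) (hrow : W *ᵥ (fun _ => 1) = fun _ => 1)
    (γ η : ℝ) (x h v : EuclideanSpace ℝ (Fin n)) :
    consensusError (x + γ • toEuclideanCLM (𝕜 := ℝ) (W - 1) h - η • v) =
      (consensusError x + γ • toEuclideanCLM (𝕜 := ℝ) (W - 1) (consensusError x)) +
        (γ • toEuclideanCLM (𝕜 := ℝ) (W - 1) (h - x) - η • consensusError v) := by
  rw [map_sub consensusError, map_add consensusError, map_smul consensusError,
    map_smul consensusError, consensusError_toEuclideanCLM_sub_one hW hrow,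
    toEuclideanCLM_sub_one_consensusError hrow, map_sub (toEuclideanCLM (𝕜 := ℝ) (W - 1))]
  module

theorem norm_sq_consensusError_update_le (hW : W.IsHermitian)
    (hrow : W *ᵥ (fun _ => 1) = fun _ => 1) {ρ γ : ℝ} (hρ0 : 0 < ρ) (hρ1 : ρ ≤ 1)
    (hγ0 : 0 < γ) (hγ1 : γ ≤ 1) {i₀ : Fin n} (hgap : ∀ i, i ≠ i₀ → |hW.eigenvalues i| ≤ 1 - ρ)
    (η : ℝ) (x h v : EuclideanSpace ℝ (Fin n)) :
    ‖consensusError (x + γ • toEuclideanCLM (𝕜 := ℝ) (W - 1) h - η • v)‖ ^ 2 ≤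
      (1 - γ * ρ / 2) * ‖consensusError x‖ ^ 2
      + (6 * γ * ‖(toEuclideanCLM (𝕜 := ℝ) (W - 1) :
          EuclideanSpace ℝ (Fin n) →L[ℝ] EuclideanSpace ℝ (Fin n))‖ ^ 2 / ρ) * ‖h - x‖ ^ 2
      + (6 * η ^ 2 / (γ * ρ)) * ‖consensusError v‖ ^ 2 := by
  set T := toEuclideanCLM (𝕜 := ℝ) (W - 1)
  set t := γ * ρ with ht
  have ht0 : 0 < t := mul_pos hγ0 hρ0
  have ht1 : t ≤ 1 := by nlinarith
  have hcontract : ‖consensusError x + γ • T (consensusError x)‖ ^ 2 ≤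
      (1 - t) ^ 2 * ‖consensusError x‖ ^ 2 :=
    hW.norm_sq_add_smul_toEuclideanCLM_sub_one_le hrow hρ0 hγ0.le hγ1 hgap
      (sum_consensusError_eq_zero x)
  have hop : ‖T (h - x)‖ ^ 2 ≤ ‖T‖ ^ 2 * ‖h - x‖ ^ 2 := by
    rw [← mul_pow]
    exact pow_le_pow_left₀ (norm_nonneg _) (T.le_opNorm _) 2
  have hperturb : ‖γ • T (h - x) - η • consensusError v‖ ^ 2 ≤
      2 * (γ ^ 2 * ‖T‖ ^ 2 * ‖h - x‖ ^ 2 + η ^ 2 * ‖consensusError v‖ ^ 2) := by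
    refine (norm_sub_sq_le_two_mul _ _).trans ?_
    rw [norm_smul, norm_smul, mul_pow, mul_pow, Real.norm_eq_abs, Real.norm_eq_abs, sq_abs,
      sq_abs, mul_assoc]
    gcongr
  calc ‖consensusError (x + γ • T h - η • v)‖ ^ 2
      = ‖(consensusError x + γ • T (consensusError x)) +
          (γ • T (h - x) - η • consensusError v)‖ ^ 2 := by
        rw [consensusError_update hW hrow]
    _ ≤ (1 + t / 2) * ‖consensusError x + γ • T (consensusError x)‖ ^ 2 +
          (1 + (t / 2)⁻¹) * ‖γ • T (h - x) - η • consensusError v‖ ^ 2 :=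
        norm_add_sq_le_one_add_mul _ _ (by positivity)
    _ ≤ (1 + t / 2) * ((1 - t) ^ 2 * ‖consensusError x‖ ^ 2) + (1 + (t / 2)⁻¹) *
          (2 * (γ ^ 2 * ‖T‖ ^ 2 * ‖h - x‖ ^ 2 + η ^ 2 * ‖consensusError v‖ ^ 2)) := by
        gcongr
    _ = (1 + t / 2) * (1 - t) ^ 2 * ‖consensusError x‖ ^ 2
          + (1 + (t / 2)⁻¹) * 2 * (γ ^ 2 * ‖T‖ ^ 2 * ‖h - x‖ ^ 2)
          + (1 + (t / 2)⁻¹) * 2 * (η ^ 2 * ‖consensusError v‖ ^ 2) := by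
        ring
    _ ≤ (1 - t / 2) * ‖consensusError x‖ ^ 2 + 6 / t * (γ ^ 2 * ‖T‖ ^ 2 * ‖h - x‖ ^ 2)
          + 6 / t * (η ^ 2 * ‖consensusError v‖ ^ 2) := by
        gcongr
        · exact one_add_half_mul_one_sub_sq_le ht0.le ht1
        · exact one_add_inv_half_mul_two_le ht0 ht1
        · exact one_add_inv_half_mul_two_le ht0 ht1
    _ = _ := by
        rw [ht]
        field_simp

end Update

section Rows

variable {n d : ℕ}

lemma norm_sq_consensusError_toLp (m : Fin n → ℝ) :
    ‖consensusError (WithLp.toLp 2 m)‖ ^ 2 = ∑ j, (m j - (1 / n : ℝ) * ∑ k, m k) ^ 2 := by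
  simp [EuclideanSpace.real_norm_sq_eq, consensusError_apply]

lemma norm_sq_toLp_sub_toLp (a b : Fin n → ℝ) :
    ‖WithLp.toLp 2 a - WithLp.toLp 2 b‖ ^ 2 = ∑ j, (a j - b j) ^ 2 := by
  simp [EuclideanSpace.real_norm_sq_eq]

lemma toLp_row_update {W : Matrix (Fin n) (Fin n) ℝ} (hW : W.IsHermitian) (γ η : ℝ)
    (X H V : Matrix (Fin d) (Fin n) ℝ) (i : Fin d) :
    WithLp.toLp 2 ((X + γ • (H * (W - 1)) - η • V : Matrix (Fin d) (Fin n) ℝ) i) =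
      WithLp.toLp 2 (X i) + γ • toEuclideanCLM (𝕜 := ℝ) (W - 1) (WithLp.toLp 2 (H i)) -
        η • WithLp.toLp 2 (V i) := by
  have hsymm : (W - 1)ᵀ = W - 1 := by
    simpa [conjTranspose_eq_transpose_of_trivial] using (hW.sub isHermitian_one).eq
  have hrow : (H * (W - 1) : Matrix (Fin d) (Fin n) ℝ) i = (W - 1) *ᵥ H i := by
    rw [mul_apply_eq_vecMul, ← mulVec_transpose, hsymm]
  rw [toEuclideanCLM_toLp, ← hrow]
  rfl

end Rows

theorem beer_consensus_error_recursion_general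
    (n d : ℕ) (W : Matrix (Fin n) (Fin n) ℝ)
    (hherm : W.IsHermitian)
    (hrow : W *ᵥ (fun _ => 1) = fun _ => 1)
    (ρ : ℝ) (hρ : ρ ∈ Set.Ioc (0 : ℝ) 1)
    (hgap : ∃ i₀ : Fin n, hherm.eigenvalues i₀ = 1 ∧
      ∀ i, i ≠ i₀ → |hherm.eigenvalues i| ≤ 1 - ρ)
    (γ η : ℝ) (hγ : γ ∈ Set.Ioc (0 : ℝ) 1)
    (C : ℝ)
    (hC : C = ‖(Matrix.toEuclideanCLM (𝕜 := ℝ) (W - 1) :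
      EuclideanSpace ℝ (Fin n) →L[ℝ] EuclideanSpace ℝ (Fin n))‖ ^ 2)
    (X H V Xp : Matrix (Fin d) (Fin n) ℝ)
    (hXp : Xp = X + γ • (H * (W - 1)) - η • V)
    (xbar vbar xbarp : Fin d → ℝ)
    (hxbar : xbar = fun i => (1 / n) * ∑ j, X i j)
    (hvbar : vbar = fun i => (1 / n) * ∑ j, V i j)
    (hxbarp : xbarp = fun i => (1 / n) * ∑ j, Xp i j) :
    ∑ i, ∑ j, (Xp i j - xbarp i) ^ 2 ≤
      (1 - γ * ρ / 2) * ∑ i, ∑ j, (X i j - xbar i) ^ 2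
      + (6 * γ * C / ρ) * ∑ i, ∑ j, (H i j - X i j) ^ 2
      + (6 * η ^ 2 / (γ * ρ)) * ∑ i, ∑ j, (V i j - vbar i) ^ 2 := by
  obtain ⟨hρ0, hρ1⟩ := hρ
  obtain ⟨hγ0, hγ1⟩ := hγ
  obtain ⟨i₀, -, hgap⟩ := hgap
  rw [mul_sum, mul_sum, mul_sum, ← sum_add_distrib, ← sum_add_distrib]
  refine sum_le_sum fun i _ => ?_
  subst hC hXp hxbar hvbar hxbarp
  have hbound := norm_sq_consensusError_update_le hherm hrow hρ0 hρ1 hγ0 hγ1 hgap η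
    (WithLp.toLp 2 (X i)) (WithLp.toLp 2 (H i)) (WithLp.toLp 2 (V i))
  rw [← toLp_row_update hherm, norm_sq_consensusError_toLp, norm_sq_consensusError_toLp,
    norm_sq_consensusError_toLp, norm_sq_toLp_sub_toLp] at hbound
  exact hbound

/-- One-step consensus error recursion for the BEER model update
X⁺ = X + γH(W - I) - ηV. -/
theorem beer_consensus_error_recursion
    (n d : ℕ) (W : Matrix (Fin n) (Fin n) ℝ)
    (hherm : W.IsHermitian)
    (h01 : ∀ i j, W i j ∈ Set.Icc (0 : ℝ) 1)
    (hrow : W *ᵥ (fun _ => 1) = fun _ => 1)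
    (hcol : (fun _ => (1 : ℝ)) ᵥ* W = fun _ => 1)
    (ρ : ℝ) (hρ : ρ ∈ Set.Ioc (0 : ℝ) 1)
    (hgap : ∃ i₀ : Fin n, hherm.eigenvalues i₀ = 1 ∧
      ∀ i, i ≠ i₀ → |hherm.eigenvalues i| ≤ 1 - ρ)
    (γ η : ℝ) (hγ : γ ∈ Set.Ioc (0 : ℝ) 1) (hη : 0 < η)
    (C : ℝ)
    (hC : C = ‖(Matrix.toEuclideanCLM (𝕜 := ℝ) (W - 1) :
      EuclideanSpace ℝ (Fin n) →L[ℝ] EuclideanSpace ℝ (Fin n))‖ ^ 2)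
    (X H V Xp : Matrix (Fin d) (Fin n) ℝ)
    (hXp : Xp = X + γ • (H * (W - 1)) - η • V)
    (xbar vbar xbarp : Fin d → ℝ)
    (hxbar : xbar = fun i => (1 / n) * ∑ j, X i j)
    (hvbar : vbar = fun i => (1 / n) * ∑ j, V i j)
    (hxbarp : xbarp = fun i => (1 / n) * ∑ j, Xp i j) :
    ∑ i, ∑ j, (Xp i j - xbarp i) ^ 2 ≤
      (1 - γ * ρ / 2) * ∑ i, ∑ j, (X i j - xbar i) ^ 2
      + (6 * γ * C / ρ) * ∑ i, ∑ j, (H i j - X i j) ^ 2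
      + (6 * η ^ 2 / (γ * ρ)) * ∑ i, ∑ j, (V i j - vbar i) ^ 2 :=
  beer_consensus_error_recursion_general n d W hherm hrow ρ hρ hgap γ η hγ C hC X H V Xp hXp xbar
    vbar xbarp hxbar hvbar hxbarp
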